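/- arXiv:2201.05586 — 2 statements merged into one kernel-verified Lean document; each statement's English description precedes it below -/
import Mathlib

section
/- Fix k ∈ {1,…,d}. The variance of the conditional expectation of the benchmark function f_δ given x_k satisfies var(E(f_δ | x_k)) = (δ²/27)(9/4)^d + (δ/9)(3/2)^d + 1/12. -/
open MeasureTheory Real

/-- Benchmark function `f_δ(x) = Σ_{i=1}^d x_i + δ ∏_{j=1}^d (1 + x_j)` on `[0,1]^d`. -/
noncomputable def fdelta {d : ℕ} (δ : ℝ) (x : Fin d → ℝ) : ℝ :=
  (∑ i, x i) + δ * ∏ j, (1 + x j)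

/-- `g_k(t) = E(f_δ | x_k = t)`: the integral of `f_δ` over all coordinates other
than the `k`-th one, which is fixed to `t`. -/
noncomputable def gk {d : ℕ} (δ : ℝ) (k : Fin d) (t : ℝ) : ℝ :=
  ∫ y in Set.Icc (0 : Fin d → ℝ) 1, fdelta δ (Function.update y k t)

/-! `f_δ` is affine in each coordinate and the cube integral of a product of one-variable
functions factorizes, so `g_k(t) = g_k(0) + (1 + δ (3/2)^(d-1)) t`. An affine function `a + b t`
of a uniform `t ∈ [0,1]` has variance `b² / 12`, and `(1 + δ (3/2)^(d-1))² / 12` expands to the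
stated formula. -/

theorem integral_Icc_sq_sub_sq_integral_affine (a b : ℝ) :
    (∫ t in Set.Icc (0 : ℝ) 1, (a + b * t) ^ 2) - (∫ t in Set.Icc (0 : ℝ) 1, (a + b * t)) ^ 2 =
      b ^ 2 / 12 := by
  simp only [integral_Icc_eq_integral_Ioc, ← intervalIntegral.integral_of_le zero_le_one]
  have hmono (c : ℝ) (n : ℕ) : IntervalIntegrable (fun t : ℝ => c * t ^ n) volume 0 1 :=
    (by fun_prop : Continuous fun t : ℝ => c * t ^ n).intervalIntegrable _ _
  have hsq : ∫ t in (0 : ℝ)..1, (a + b * t) ^ 2 = a ^ 2 + a * b + b ^ 2 / 3 := by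
    have h (t : ℝ) : (a + b * t) ^ 2 = a ^ 2 * t ^ 0 + (2 * a * b * t ^ 1 + b ^ 2 * t ^ 2) := by
      ring
    simp only [h]
    rw [intervalIntegral.integral_add (hmono _ _) ((hmono _ _).add (hmono _ _)),
      intervalIntegral.integral_add (hmono _ _) (hmono _ _)]
    simp only [intervalIntegral.integral_const_mul, integral_pow]
    ring
  have hlin : ∫ t in (0 : ℝ)..1, (a + b * t) = a + b / 2 := by
    have h (t : ℝ) : a + b * t = a * t ^ 0 + b * t ^ 1 := by ring
    simp only [h]
    rw [intervalIntegral.integral_add (hmono _ _) (hmono _ _)]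
    simp only [intervalIntegral.integral_const_mul, integral_pow]
    ring
  rw [hsq, hlin]
  ring

section UnitCube

variable {ι : Type*} [Fintype ι]

theorem integral_unitCube_const (c : ℝ) : ∫ _ in Set.Icc (0 : ι → ℝ) 1, c = c := by
  simp [measureReal_def, Real.volume_Icc_pi]

theorem integral_unitCube_prod (f : ι → ℝ → ℝ) :
    ∫ y in Set.Icc (0 : ι → ℝ) 1, ∏ i, f i (y i) = ∏ i, ∫ x in Set.Icc (0 : ℝ) 1, f i x := by
  rw [← Set.pi_univ_Icc, volume_pi, Measure.restrict_pi_pi]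
  exact integral_fintype_prod_eq_prod f

theorem integral_unitCube_prod_one_add_update_zero [DecidableEq ι] (k : ι) :
    ∫ y in Set.Icc (0 : ι → ℝ) 1, ∏ j, (1 + Function.update y k 0 j) =
      (3 / 2) ^ (Fintype.card ι - 1) := by
  have hfactor (y : ι → ℝ) : ∏ j, (1 + Function.update y k 0 j) =
      ∏ j, Function.update (fun _ x => 1 + x) k (fun _ => 1) j (y j) := by
    congr! 1 with j
    rcases eq_or_ne j k with rfl | hj <;> simp [*]
  have hfactor_integral : ∫ x in Set.Icc (0 : ℝ) 1, (1 + x) = 3 / 2 := by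
    rw [integral_Icc_eq_integral_Ioc, ← intervalIntegral.integral_of_le zero_le_one,
      intervalIntegral.integral_add intervalIntegrable_const
        intervalIntegral.intervalIntegrable_id]
    norm_num
  simp only [hfactor, integral_unitCube_prod]
  rw [Finset.prod_congr rfl fun j _ => Function.apply_update
      (fun (_ : ι) (g : ℝ → ℝ) => ∫ x in Set.Icc (0 : ℝ) 1, g x) _ k _ j,
    Finset.prod_update_of_mem (Finset.mem_univ k)]
  simp [hfactor_integral, Finset.card_sdiff, div_pow]

end UnitCube

theorem fdelta_update {d : ℕ} (δ : ℝ) (x : Fin d → ℝ) (k : Fin d) (t : ℝ) :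
    fdelta δ (Function.update x k t) =
      fdelta δ (Function.update x k 0) + t * (1 + δ * ∏ j, (1 + Function.update x k 0 j)) := by
  have hprod (s : ℝ) : ∏ j, (1 + Function.update x k s j) =
      (1 + s) * ∏ j ∈ Finset.univ \ {k}, (1 + x j) := by
    rw [← Finset.prod_update_of_mem (Finset.mem_univ k)]
    congr! 1 with j
    rcases eq_or_ne j k with rfl | hj <;> simp [*]
  simp only [fdelta, Finset.sum_update_of_mem (Finset.mem_univ k), hprod]
  ring

theorem gk_eq_add_mul {d : ℕ} (δ : ℝ) (k : Fin d) (t : ℝ) :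
    gk δ k t = gk δ k 0 + (1 + δ * (3 / 2) ^ (d - 1)) * t := by
  have hint {f : (Fin d → ℝ) → ℝ} (hf : Continuous f) : IntegrableOn f (Set.Icc 0 1) :=
    hf.continuousOn.integrableOn_compact isCompact_Icc
  have hcont : Continuous fun y : Fin d → ℝ => fdelta δ (Function.update y k 0) := by
    unfold fdelta; fun_prop
  unfold gk
  simp only [fdelta_update _ _ k t]
  rw [integral_add (hint hcont) (hint (by fun_prop)), integral_const_mul,
    integral_add (hint continuous_const) (hint (by fun_prop)), integral_const_mul,
    integral_unitCube_const, integral_unitCube_prod_one_add_update_zero, Fintype.card_fin]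
  ring

theorem fdelta_var_condExp_single_general (d : ℕ) (δ : ℝ) (k : Fin d) :
    (∫ t in Set.Icc (0 : ℝ) 1, (gk δ k t) ^ 2) -
        (∫ t in Set.Icc (0 : ℝ) 1, gk δ k t) ^ 2 =
      δ ^ 2 / 27 * (9 / 4 : ℝ) ^ d + δ / 9 * (3 / 2 : ℝ) ^ d + 1 / 12 := by
  have hg : gk δ k = fun t => gk δ k 0 + (1 + δ * (3 / 2) ^ (d - 1)) * t :=
    funext (gk_eq_add_mul δ k)
  obtain ⟨e, rfl⟩ := Nat.exists_eq_add_one_of_ne_zero k.pos.ne'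
  rw [hg, integral_Icc_sq_sub_sq_integral_affine, Nat.add_sub_cancel,
    show (9 / 4 : ℝ) = 3 / 2 * (3 / 2) by norm_num, mul_pow, pow_succ]
  set c := (3 / 2 : ℝ) ^ e
  ring

/-- Variance of the conditional expectation of `f_δ` given `x_k`
(with `x_k` uniform on `[0,1]`):
`var(E(f_δ | x_k)) = (δ²/27)(9/4)^d + (δ/9)(3/2)^d + 1/12`. -/
theorem fdelta_var_condExp_single (d : ℕ) (hd : 0 < d) (δ : ℝ) (k : Fin d) :
    (∫ t in Set.Icc (0 : ℝ) 1, (gk δ k t) ^ 2) -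
        (∫ t in Set.Icc (0 : ℝ) 1, gk δ k t) ^ 2 =
      δ ^ 2 / 27 * (9 / 4 : ℝ) ^ d + δ / 9 * (3 / 2 : ℝ) ^ d + 1 / 12 :=
  fdelta_var_condExp_single_general d δ k
end

section
/- Fix k ∈ {1,…,d}. The variance of the conditional expectation of the benchmark function f_δ given all coordinates except x_k satisfies var(E(f_δ | x_l, l ≠ k)) = (δ(d−1)/9)(3/2)^d + δ² ( (27/28)(7/3)^d − (9/4)^d ) + (d−1)/12. -/
open MeasureTheory Real

/-- `h_k(x) = E(f_δ | x_l, l ≠ k)`: the integral of `f_δ` over the `k`-th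
coordinate with the remaining coordinates fixed. -/
noncomputable def hk {d : ℕ} (δ : ℝ) (k : Fin d) (x : Fin d → ℝ) : ℝ :=
  ∫ t in Set.Icc (0 : ℝ) 1, fdelta δ (Function.update x k t)

/-!
Integrating out `x_k` gives `h_k = S + (3δ/2) P + 1/2` with `S = ∑_{i ≠ k} x_i` and
`P = ∏_{j ≠ k} (1 + x_j)`. Under the uniform measure on the cube the coordinates are independent
uniforms on `[0,1]`, so every moment of `S` and `P` factors into one-dimensional integrals:
`Var S = (d-1)/12`, `cov(x_i, P) = (3/2)^(d-1)/18` (from `∫ t(1+t) = 5/6`) and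
`Var P = (7/3)^(d-1) - (9/4)^(d-1)`. Bilinearity of the covariance then gives
`Var h_k = Var S + 3δ cov(S, P) + (3δ/2)² Var P`.
-/

open ProbabilityTheory Finset
open scoped ENNReal

theorem setIntegral_Icc_zero_one_quadratic (a b c : ℝ) :
    ∫ t in Set.Icc (0 : ℝ) 1, a * t ^ 2 + b * t + c = a / 3 + b / 2 + c := by
  rw [integral_Icc_eq_integral_Ioc, ← intervalIntegral.integral_of_le zero_le_one,
    intervalIntegral.integral_add, intervalIntegral.integral_add,
    intervalIntegral.integral_const_mul, intervalIntegral.integral_const_mul]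
  · norm_num [integral_pow, integral_id]
    ring
  all_goals exact (by fun_prop : Continuous _).intervalIntegrable _ _

section UnitCube

variable {ι : Type*} [Fintype ι]

theorem setIntegral_Icc_pi_prod (a b : ι → ℝ) (g : ι → ℝ → ℝ) :
    ∫ x in Set.Icc a b, ∏ i, g i (x i) = ∏ i, ∫ t in Set.Icc (a i) (b i), g i t := by
  rw [← Set.pi_univ_Icc, volume_pi, Measure.restrict_pi_pi, integral_fintype_prod_eq_prod]

instance isProbabilityMeasure_restrict_unitCube :
    IsProbabilityMeasure (volume.restrict (Set.Icc (0 : ι → ℝ) 1)) :=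
  ⟨by simp [Real.volume_Icc_pi]⟩

theorem memLp_unitCube {f : (ι → ℝ) → ℝ} (hf : Continuous f) (p : ℝ≥0∞) :
    MemLp f p (volume.restrict (Set.Icc 0 1)) := by
  obtain ⟨C, hC⟩ := isCompact_Icc.exists_bound_of_continuousOn hf.continuousOn
  exact MemLp.of_bound hf.aestronglyMeasurable C (ae_restrict_of_forall_mem measurableSet_Icc hC)

theorem setIntegral_unitCube_finset_prod (s : Finset ι) (g : ι → ℝ → ℝ) :
    ∫ x in Set.Icc (0 : ι → ℝ) 1, ∏ i ∈ s, g i (x i) =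
      ∏ i ∈ s, ∫ t in Set.Icc (0 : ℝ) 1, g i t := by
  classical
  calc ∫ x in Set.Icc (0 : ι → ℝ) 1, ∏ i ∈ s, g i (x i)
      = ∫ x in Set.Icc (0 : ι → ℝ) 1, ∏ i, if i ∈ s then g i (x i) else 1 := by
        simp only [Fintype.prod_ite_mem]
    _ = ∏ i, ∫ t in Set.Icc (0 : ℝ) 1, if i ∈ s then g i t else 1 :=
        setIntegral_Icc_pi_prod 0 1 (fun i t => if i ∈ s then g i t else 1)
    _ = ∏ i ∈ s, ∫ t in Set.Icc (0 : ℝ) 1, g i t := by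
        rw [← Fintype.prod_ite_mem s]
        exact Finset.prod_congr rfl fun i _ => by split_ifs <;> simp

theorem setIntegral_unitCube_mul_prod {t : Finset ι} {i : ι} (hi : i ∉ t) (u : ℝ → ℝ)
    (v : ι → ℝ → ℝ) :
    ∫ x in Set.Icc (0 : ι → ℝ) 1, u (x i) * ∏ j ∈ t, v j (x j) =
      (∫ r in Set.Icc (0 : ℝ) 1, u r) * ∫ x in Set.Icc (0 : ι → ℝ) 1, ∏ j ∈ t, v j (x j) := by
  classical
  have hv : ∀ j ∈ t, Function.update v i u j = v j := fun j hj =>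
    Function.update_of_ne (ne_of_mem_of_not_mem hj hi) _ _
  calc ∫ x in Set.Icc (0 : ι → ℝ) 1, u (x i) * ∏ j ∈ t, v j (x j)
      = ∫ x in Set.Icc (0 : ι → ℝ) 1, ∏ j ∈ insert i t, Function.update v i u j (x j) := by
        simp only [prod_insert hi, Function.update_self]
        exact integral_congr_ae (ae_of_all _ fun x => by
          simp only [prod_congr rfl fun j hj => congrFun (hv j hj) (x j)])
    _ = ∏ j ∈ insert i t, ∫ r in Set.Icc (0 : ℝ) 1, Function.update v i u j r :=
        setIntegral_unitCube_finset_prod _ _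
    _ = (∫ r in Set.Icc (0 : ℝ) 1, u r) * ∫ x in Set.Icc (0 : ι → ℝ) 1, ∏ j ∈ t, v j (x j) := by
        rw [prod_insert hi, Function.update_self, prod_congr rfl fun j hj => by rw [hv j hj],
          setIntegral_unitCube_finset_prod]

theorem setIntegral_unitCube_apply (i : ι) : ∫ x in Set.Icc (0 : ι → ℝ) 1, x i = 1 / 2 := by
  have h := setIntegral_unitCube_finset_prod {i} fun _ t => t
  simp only [prod_singleton] at h
  rw [h]
  convert setIntegral_Icc_zero_one_quadratic 0 1 0 using 3 <;> ring

theorem covariance_unitCube_apply [DecidableEq ι] (i j : ι) :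
    cov[fun x : ι → ℝ => x i, fun x => x j; volume.restrict (Set.Icc 0 1)] =
      if i = j then 1 / 12 else 0 := by
  have h_id : ∫ t in Set.Icc (0 : ℝ) 1, t = 1 / 2 := by
    convert setIntegral_Icc_zero_one_quadratic 0 1 0 using 3 <;> ring
  have h_sq : ∫ t in Set.Icc (0 : ℝ) 1, t * t = 1 / 3 := by
    convert setIntegral_Icc_zero_one_quadratic 1 0 0 using 3 <;> ring
  rw [covariance_eq_sub (memLp_unitCube (by fun_prop) 2) (memLp_unitCube (by fun_prop) 2)]
  simp only [Pi.mul_apply, setIntegral_unitCube_apply]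
  split_ifs with hij
  · subst hij
    have h := setIntegral_unitCube_finset_prod {i} fun _ t => t * t
    simp only [prod_singleton] at h
    rw [h, h_sq]
    norm_num
  · have h := setIntegral_unitCube_finset_prod {i, j} fun _ t => t
    simp only [prod_pair hij] at h
    rw [h, h_id]
    norm_num

theorem setIntegral_unitCube_prod_one_add (s : Finset ι) :
    ∫ x in Set.Icc (0 : ι → ℝ) 1, ∏ j ∈ s, (1 + x j) = (3 / 2) ^ #s := by
  rw [setIntegral_unitCube_finset_prod s fun _ t => 1 + t, prod_const]
  congr 1
  convert setIntegral_Icc_zero_one_quadratic 0 1 1 using 3 <;> ring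

theorem variance_unitCube_prod_one_add (s : Finset ι) :
    Var[fun x : ι → ℝ => ∏ j ∈ s, (1 + x j); volume.restrict (Set.Icc 0 1)] =
      (7 / 3) ^ #s - (9 / 4) ^ #s := by
  have h_sq : ∫ t in Set.Icc (0 : ℝ) 1, (1 + t) ^ 2 = 7 / 3 := by
    convert setIntegral_Icc_zero_one_quadratic 1 2 1 using 3 <;> ring
  rw [variance_eq_sub (memLp_unitCube (by fun_prop) 2)]
  simp only [Pi.pow_apply, ← Finset.prod_pow, setIntegral_unitCube_prod_one_add]
  rw [setIntegral_unitCube_finset_prod s fun _ t => (1 + t) ^ 2, prod_const, h_sq, ← pow_mul,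
    mul_comm, pow_mul]
  norm_num

theorem covariance_unitCube_apply_prod_one_add {s : Finset ι} {i : ι} (hi : i ∈ s) :
    cov[fun x : ι → ℝ => x i, fun x => ∏ j ∈ s, (1 + x j); volume.restrict (Set.Icc 0 1)] =
      (3 / 2) ^ #s / 18 := by
  classical
  have h_mul : ∫ t in Set.Icc (0 : ℝ) 1, t * (1 + t) = 5 / 6 := by
    convert setIntegral_Icc_zero_one_quadratic 1 1 0 using 3 <;> ring
  have h_split : ∀ x : ι → ℝ,
      x i * ∏ j ∈ s, (1 + x j) = x i * (1 + x i) * ∏ j ∈ s.erase i, (1 + x j) := fun x => by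
    rw [← mul_prod_erase s (fun j => 1 + x j) hi, mul_assoc]
  rw [covariance_eq_sub (memLp_unitCube (by fun_prop) 2) (memLp_unitCube (by fun_prop) 2)]
  simp only [Pi.mul_apply, h_split, setIntegral_unitCube_apply, setIntegral_unitCube_prod_one_add]
  rw [setIntegral_unitCube_mul_prod (notMem_erase i s) (fun r => r * (1 + r)) fun _ r => 1 + r,
    h_mul, setIntegral_unitCube_prod_one_add, ← card_erase_add_one hi, pow_succ]
  ring

theorem variance_unitCube_sum_add_mul_prod_one_add (s : Finset ι) (c : ℝ) :
    Var[fun x : ι → ℝ => ∑ i ∈ s, x i + c * ∏ j ∈ s, (1 + x j); volume.restrict (Set.Icc 0 1)] =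
      #s / 12 + c * #s / 9 * (3 / 2) ^ #s + c ^ 2 * ((7 / 3) ^ #s - (9 / 4) ^ #s) := by
  classical
  have h_coord : ∀ i, MemLp (fun x : ι → ℝ => x i) 2 (volume.restrict (Set.Icc 0 1)) :=
    fun i => memLp_unitCube (by fun_prop) 2
  have h_prod : MemLp (fun x : ι → ℝ => ∏ j ∈ s, (1 + x j)) 2 (volume.restrict (Set.Icc 0 1)) :=
    memLp_unitCube (by fun_prop) 2
  rw [variance_fun_add (memLp_unitCube (by fun_prop) 2) (memLp_unitCube (by fun_prop) 2),
    variance_fun_sum' fun i _ => h_coord i, covariance_const_mul_right,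
    covariance_fun_sum_left' (fun i _ => h_coord i) h_prod, variance_const_mul,
    variance_unitCube_prod_one_add,
    sum_congr rfl fun i hi => covariance_unitCube_apply_prod_one_add hi]
  simp only [covariance_unitCube_apply, sum_ite_eq, sum_ite_mem, inter_self, sum_const,
    nsmul_eq_mul]
  ring

end UnitCube

theorem hk_eq_sum_add_mul_prod {d : ℕ} (δ : ℝ) (k : Fin d) (x : Fin d → ℝ) :
    hk δ k x = ∑ i ∈ univ.erase k, x i + 3 * δ / 2 * ∏ j ∈ univ.erase k, (1 + x j) + 1 / 2 := by
  have h_sum : ∀ t, ∑ i, Function.update x k t i = t + ∑ i ∈ univ.erase k, x i := fun t => by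
    rw [sum_update_of_mem (mem_univ k), sdiff_singleton_eq_erase]
  have h_prod : ∀ t, ∏ j, (1 + Function.update x k t j) =
      (1 + t) * ∏ j ∈ univ.erase k, (1 + x j) := fun t => by
    rw [← mul_prod_erase univ _ (mem_univ k), Function.update_self,
      prod_congr rfl fun j hj => by rw [Function.update_of_ne (ne_of_mem_erase hj)]]
  set A := ∑ i ∈ univ.erase k, x i
  set B := ∏ j ∈ univ.erase k, (1 + x j)
  calc hk δ k x = ∫ t in Set.Icc (0 : ℝ) 1, 0 * t ^ 2 + (1 + δ * B) * t + (A + δ * B) := by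
        simp only [hk, fdelta, h_sum, h_prod]
        congr 1
        ext t
        ring
    _ = A + 3 * δ / 2 * B + 1 / 2 := by
        rw [setIntegral_Icc_zero_one_quadratic]
        ring

theorem fdelta_var_condExp_except_single_general (d : ℕ) (δ : ℝ) (k : Fin d) :
    (∫ x in Set.Icc (0 : Fin d → ℝ) 1, (hk δ k x) ^ 2) -
        (∫ x in Set.Icc (0 : Fin d → ℝ) 1, hk δ k x) ^ 2 =
      δ * ((d : ℝ) - 1) / 9 * (3 / 2 : ℝ) ^ d +
        δ ^ 2 * (27 / 28 * (7 / 3 : ℝ) ^ d - (9 / 4 : ℝ) ^ d) +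
        ((d : ℝ) - 1) / 12 := by
  have h_hk : hk δ k = fun x =>
      ∑ i ∈ univ.erase k, x i + 3 * δ / 2 * ∏ j ∈ univ.erase k, (1 + x j) + 1 / 2 :=
    funext (hk_eq_sum_add_mul_prod δ k)
  obtain ⟨n, rfl⟩ := Nat.exists_eq_add_one_of_ne_zero k.pos.ne'
  have h_card : #(univ.erase k) = n := by simp
  calc _ = Var[hk δ k; volume.restrict (Set.Icc 0 1)] :=
        (variance_eq_sub (memLp_unitCube (by rw [h_hk]; fun_prop) 2)).symm
    _ = Var[fun x : Fin (n + 1) → ℝ => ∑ i ∈ univ.erase k, x i +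
          3 * δ / 2 * ∏ j ∈ univ.erase k, (1 + x j); volume.restrict (Set.Icc 0 1)] := by
        rw [h_hk, variance_add_const (by fun_prop)]
    _ = _ := by
        rw [variance_unitCube_sum_add_mul_prod_one_add, h_card]
        push_cast
        ring

/-- Variance of the conditional expectation of `f_δ` given all coordinates except
`x_k` (with those coordinates uniform on `[0,1]^{d−1}`):
`var(E(f_δ | x_l, l ≠ k)) = (δ(d−1)/9)(3/2)^d + δ²((27/28)(7/3)^d − (9/4)^d) + (d−1)/12`. -/
theorem fdelta_var_condExp_except_single (d : ℕ) (hd : 0 < d) (δ : ℝ) (k : Fin d) :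
    (∫ x in Set.Icc (0 : Fin d → ℝ) 1, (hk δ k x) ^ 2) -
        (∫ x in Set.Icc (0 : Fin d → ℝ) 1, hk δ k x) ^ 2 =
      δ * ((d : ℝ) - 1) / 9 * (3 / 2 : ℝ) ^ d +
        δ ^ 2 * (27 / 28 * (7 / 3 : ℝ) ^ d - (9 / 4 : ℝ) ^ d) +
        ((d : ℝ) - 1) / 12 :=
  fdelta_var_condExp_except_single_general d δ k
end
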